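/- There do not exist rational numbers a > 0 and b satisfying both 7 = (2g + 3/2)a - 7b and -14 = (2g + 3/2)a² - 14b² - 14ab, for g ∈ {6,10,11,12}, except with b = 1 and a = 28/(4g+3). -/
import Mathlib


/-- For `g ∈ {6,10,11,12}`, rational numbers `a > 0` and `b` satisfying both
`7 = (2g + 3/2)a - 7b` and `-14 = (2g + 3/2)a² - 14b² - 14ab` must have
`b = 1` and `a = 28/(4g+3)`. -/
theorem stmt_19 (g : ℕ) (hg : g ∈ ({6, 10, 11, 12} : Set ℕ)) (a b : ℚ) (ha : 0 < a)
    (h1 : (7 : ℚ) = (2 * g + 3 / 2) * a - 7 * b)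
    (h2 : (-14 : ℚ) = (2 * g + 3 / 2) * a ^ 2 - 14 * b ^ 2 - 14 * a * b) :
    b = 1 ∧ a = 28 / (4 * (g : ℚ) + 3) := by
  have hgnn : (0 : ℚ) ≤ (g : ℚ) := Nat.cast_nonneg g
  have key : (1 - b) * (a + 2 * b + 2) = 0 := by linear_combination (a * h1 - h2) / 7
  rcases mul_eq_zero.mp key with hb | hab
  · have hb1 : b = 1 := by linarith
    subst hb1
    refine ⟨rfl, ?_⟩
    have hd : (4 * (g : ℚ) + 3) ≠ 0 := by positivity
    field_simp
    linarith
  · exfalso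
    nlinarith [mul_nonneg hgnn ha.le]
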